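/- arXiv:1905.05343 — 3 statements merged into one kernel-verified Lean document; each statement's English description precedes it below -/
import Mathlib

section
/- In a weakly reversible chemical reaction network, if W ⊆ S is a semilocking set and for some reaction y → y' we have W ∩ supp(y) ≠ ∅, then for every reaction z → z' in the same connected component of the reaction graph, W ∩ supp(z) ≠ ∅. -/
/-!
Semilocking says that "`W` meets the complex" propagates backwards along every reaction, hence
along directed paths. In a weakly reversible network every reaction `a → b` is reversed by a
directed path `b →* a`, so a path in the undirected reaction graph from `y` to `z` yields a
directed path from `z` back to `y`, along which the property travels from `y` to `z`.
-/

namespace Relation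

variable {α : Type*} {r : α → α → Prop} {a b : α}

theorem ReflTransGen.closed' {P : α → Prop} (dc : ∀ {a b}, r a b → P b → P a)
    (h : ReflTransGen r a b) : P b → P a :=
  h.head_induction_on id fun hr _ hi ↦ dc hr ∘ hi

theorem reflTransGen_of_reflTransGen_symmGen (hrev : ∀ a b, r a b → ReflTransGen r b a)
    (h : ReflTransGen (SymmGen r) a b) : ReflTransGen r b a := by
  have hstep : SymmGen r ≤ ReflTransGen (Function.swap r) := by
    rintro c d (hcd | hdc)
    · exact reflTransGen_swap.mpr (hrev c d hcd)
    · exact .single hdc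
  exact reflTransGen_swap.mp (reflTransGen_closed hstep a b h)

end Relation

theorem semilocking_locks_linkage_class_general {n : ℕ}
    (R : Set ((Fin n → ℕ) × (Fin n → ℕ)))
    (W : Set (Fin n))
    (hWR : ∀ p ∈ R, Relation.ReflTransGen (fun a b => (a, b) ∈ R) p.2 p.1)
    (hsemi : ∀ p ∈ R, (∃ j ∈ W, p.2 j ≠ 0) → ∃ j ∈ W, p.1 j ≠ 0)
    (y z : Fin n → ℕ)
    (hconn : Relation.ReflTransGen (fun a b => (a, b) ∈ R ∨ (b, a) ∈ R) y z)
    (hy : ∃ j ∈ W, y j ≠ 0) :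
    ∃ j ∈ W, z j ≠ 0 := by
  have hzy : Relation.ReflTransGen (fun a b => (a, b) ∈ R) z y :=
    Relation.reflTransGen_of_reflTransGen_symmGen (fun a b hab => hWR (a, b) hab) hconn
  exact hzy.closed' (P := fun c => ∃ j ∈ W, c j ≠ 0) (fun hab => hsemi _ hab) hy

/-- In a weakly reversible network, if a semilocking set `W` touches the source of
one reaction, then `W` touches the source of every reaction in the same connected
component of the reaction graph. -/
theorem semilocking_locks_linkage_class {n : ℕ}
    (R : Set ((Fin n → ℕ) × (Fin n → ℕ)))
    (W : Set (Fin n)) (hWne : W.Nonempty)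
    (hWR : ∀ p ∈ R, Relation.ReflTransGen (fun a b => (a, b) ∈ R) p.2 p.1)
    (hsemi : ∀ p ∈ R, (∃ j ∈ W, p.2 j ≠ 0) → ∃ j ∈ W, p.1 j ≠ 0)
    (y y' z z' : Fin n → ℕ) (hyy' : (y, y') ∈ R) (hzz' : (z, z') ∈ R)
    (hconn : Relation.ReflTransGen (fun a b => (a, b) ∈ R ∨ (b, a) ∈ R) y z)
    (hy : ∃ j ∈ W, y j ≠ 0) :
    ∃ j ∈ W, z j ≠ 0 :=
  semilocking_locks_linkage_class_general R W hWR hsemi y z hconn hy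
end

section
/- For any trajectory x(t) of the delayed mass-action dynamics ẋ(t) = ∑ᵢ kᵢ[(x(t−τᵢ))^{y·ᵢ} y'·ᵢ − (x(t))^{y·ᵢ} y·ᵢ] with initial function ψ, the quantity c_a(x_t) = aᵀ[x(t) + ∑ᵢ kᵢ (∫_{t−τᵢ}^{t} (x(s))^{y·ᵢ} ds) y·ᵢ] is constant in t for every a ∈ S^⊥, where S is the stoichiometric subspace. -/
open scoped BigOperators

/-- For a delayed mass-action system, the quantity
`aᵀ (x(t) + ∑ᵢ kᵢ (∫_{t-τᵢ}^t x(s)^{yᵢ} ds) yᵢ)` is conserved in time for every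
`a` orthogonal to the stoichiometric subspace. -/
theorem delayed_conservation {n r : ℕ}
    (y y' : Fin r → Fin n → ℕ) (k : Fin r → ℝ) (hk : ∀ i, 0 < k i)
    (τ : Fin r → ℝ) (hτ : ∀ i, 0 ≤ τ i)
    (x : ℝ → Fin n → ℝ) (hxc : Continuous x) (hxnn : ∀ t j, 0 ≤ x t j)
    (hdyn : ∀ t : ℝ, 0 ≤ t → HasDerivAt x
      (∑ i, k i • ((∏ j, x (t - τ i) j ^ y i j) • (fun j => ((y' i j : ℝ)))
        - (∏ j, x t j ^ y i j) • (fun j => ((y i j : ℝ))))) t)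
    (a : Fin n → ℝ) (ha : ∀ i, ∑ j, a j * ((y' i j : ℝ) - (y i j : ℝ)) = 0) :
    ∀ t : ℝ, 0 ≤ t →
      ∑ j, a j * (x t j + ∑ i, k i * (∫ s in (t - τ i)..t, ∏ l, x s l ^ y i l) * (y i j))
        = ∑ j, a j * (x 0 j + ∑ i, k i * (∫ s in (-τ i)..(0:ℝ), ∏ l, x s l ^ y i l) * (y i j)) := by
  set f : Fin r → ℝ → ℝ := fun i s => ∏ l, x s l ^ y i l with hf
  have hfc : ∀ i, Continuous (f i) := by
    intro i
    exact continuous_finset_prod _ fun l _ => ((continuous_apply l).comp hxc).pow _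
  set F : ℝ → ℝ := fun t =>
    ∑ j, a j * (x t j + ∑ i, k i * (∫ s in (t - τ i)..t, f i s) * (y i j)) with hFdef
  -- derivative of the integral terms
  have hI : ∀ (i : Fin r) (t : ℝ),
      HasDerivAt (fun u => ∫ s in (u - τ i)..u, f i s) (f i t - f i (t - τ i)) t := by
    intro i t
    have h1 : HasDerivAt (fun u => ∫ s in (0:ℝ)..u, f i s) (f i t) t :=
      intervalIntegral.integral_hasDerivAt_right ((hfc i).intervalIntegrable _ _)
        ((hfc i).stronglyMeasurableAtFilter _ _) (hfc i).continuousAt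
    have h2 : HasDerivAt (fun u => ∫ s in (0:ℝ)..(u - τ i), f i s) (f i (t - τ i)) t := by
      have h2' : HasDerivAt (fun u => ∫ s in (0:ℝ)..u, f i s) (f i (t - τ i)) (t - τ i) :=
        intervalIntegral.integral_hasDerivAt_right ((hfc i).intervalIntegrable _ _)
          ((hfc i).stronglyMeasurableAtFilter _ _) (hfc i).continuousAt
      have hid : HasDerivAt (fun u : ℝ => u - τ i) 1 t := by
        simpa using (hasDerivAt_id t).sub_const (τ i)
      simpa [Function.comp_def] using (h2'.comp t hid)
    have h3 := h1.fun_sub h2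
    have heq : (fun u => (∫ s in (0:ℝ)..u, f i s) - ∫ s in (0:ℝ)..(u - τ i), f i s)
        = fun u => ∫ s in (u - τ i)..u, f i s := by
      funext u
      exact intervalIntegral.integral_interval_sub_left ((hfc i).intervalIntegrable _ _)
        ((hfc i).intervalIntegrable _ _)
    rw [heq] at h3
    exact h3
  have key : ∀ t : ℝ, 0 ≤ t → HasDerivAt F 0 t := by
    intro t ht
    have hx := hdyn t ht
    set v : Fin n → ℝ := (∑ i, k i • ((∏ j, x (t - τ i) j ^ y i j) • (fun j => ((y' i j : ℝ)))
        - (∏ j, x t j ^ y i j) • (fun j => ((y i j : ℝ))))) with hv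
    have hxj : ∀ j, HasDerivAt (fun u => x u j) (v j) t := fun j => hasDerivAt_pi.1 hx j
    have hvj : ∀ j, v j = ∑ i, k i * (f i (t - τ i) * (y' i j) - f i t * (y i j)) := by
      intro j
      simp [hv, hf, Finset.sum_apply, Pi.smul_apply, Pi.sub_apply, smul_eq_mul]
    have hterm : ∀ j, HasDerivAt
        (fun u => a j * (x u j + ∑ i, k i * (∫ s in (u - τ i)..u, f i s) * (y i j)))
        (a j * (v j + ∑ i, k i * (f i t - f i (t - τ i)) * (y i j))) t := by
      intro j
      refine HasDerivAt.const_mul _ ?_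
      refine (hxj j).add ?_
      exact HasDerivAt.fun_sum fun i _ => ((hI i t).const_mul (k i)).mul_const _
    have hsum : HasDerivAt F
        (∑ j, a j * (v j + ∑ i, k i * (f i t - f i (t - τ i)) * (y i j))) t :=
      HasDerivAt.fun_sum fun j _ => hterm j
    have hzero : (∑ j, a j * (v j + ∑ i, k i * (f i t - f i (t - τ i)) * (y i j))) = 0 := by
      have : ∀ j, a j * (v j + ∑ i, k i * (f i t - f i (t - τ i)) * (y i j))
          = ∑ i, k i * f i (t - τ i) * (a j * ((y' i j : ℝ) - (y i j : ℝ))) := by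
        intro j
        rw [hvj j, ← Finset.sum_add_distrib, Finset.mul_sum]
        exact Finset.sum_congr rfl fun i _ => by ring
      rw [Finset.sum_congr rfl fun j _ => this j, Finset.sum_comm]
      refine Finset.sum_eq_zero fun i _ => ?_
      rw [← Finset.mul_sum, ha i, mul_zero]
    rw [hzero] at hsum
    exact hsum
  intro t ht
  have hF0 : ∀ u ∈ Set.Icc (0:ℝ) t, F u = F 0 := by
    refine constant_of_has_deriv_right_zero (fun u hu => (key u hu.1).continuousAt.continuousWithinAt)
      (fun u hu => (key u hu.1).hasDerivWithinAt) 
  have := hF0 t ⟨ht, le_refl t⟩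
  simpa [hFdef, hf, zero_sub] using this
end

section
/- Let x̄ ∈ ℝⁿ>0 be a complex balanced equilibrium of a mass-action system, and let x ∈ ℝⁿ>0 satisfy (x/x̄)^{y'·ᵢ} = (x/x̄)^{y·ᵢ} for every reaction i. Then x is an equilibrium: ∑ᵢ kᵢ x^{y·ᵢ}(y'·ᵢ − y·ᵢ) = 0. -/
/-!
Writing `x^m = (x/x̄)^m x̄^m`, the hypothesis makes `(x/x̄)^{y i}` depend only on the product
complex `y' i`; so for each complex `z` both the inflow and the outflow of `z` at `x` are the
corresponding flows at `x̄` scaled by `(x/x̄)^z`, and complex balance at `x̄` transfers to `x`.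
A complex balanced flux has zero net effect, since grouping the reactions by their product and by
their reactant complex gives the same sum over complexes.
-/

open Finset

section FiberSums

variable {ρ κ R M : Type*} [Fintype ρ] [DecidableEq κ] [Ring R] [AddCommGroup M] [Module R M]

theorem sum_smul_comp_eq_sum_fiber {C : Finset κ} (f : ρ → R) (s : ρ → κ) (g : κ → M)
    (hs : ∀ i, s i ∈ C) :
    ∑ i, f i • g (s i) = ∑ z ∈ C, (∑ i with s i = z, f i) • g z := by
  rw [← sum_fiberwise_of_maps_to (fun i _ => hs i)]
  refine sum_congr rfl fun z _ => ?_
  rw [sum_smul]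
  exact sum_congr rfl fun i hi => by rw [(mem_filter.mp hi).2]

theorem sum_smul_sub_eq_zero_of_fiber_sums_eq (f : ρ → R) (s t : ρ → κ) (g : κ → M)
    (h : ∀ z, ∑ i with t i = z, f i = ∑ i with s i = z, f i) :
    ∑ i, f i • (g (t i) - g (s i)) = 0 := by
  let C := univ.image s ∪ univ.image t
  have hs : ∀ i, s i ∈ C := fun i => mem_union_left _ (mem_image_of_mem s (mem_univ i))
  have ht : ∀ i, t i ∈ C := fun i => mem_union_right _ (mem_image_of_mem t (mem_univ i))
  simp only [smul_sub, sum_sub_distrib, sub_eq_zero]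
  rw [sum_smul_comp_eq_sum_fiber f t g ht, sum_smul_comp_eq_sum_fiber f s g hs]
  exact sum_congr rfl fun z _ => by rw [h z]

end FiberSums

section MassAction

variable {ι ρ K : Type*} [Fintype ι] [Fintype ρ] [Field K]

theorem prod_pow_eq_prod_div_pow_mul_prod_pow {x xb : ι → K} (hxb : ∀ j, xb j ≠ 0)
    (m : ι → ℕ) :
    ∏ j, x j ^ m j = (∏ j, (x j / xb j) ^ m j) * ∏ j, xb j ^ m j := by
  rw [← prod_mul_distrib]
  exact prod_congr rfl fun j _ => by rw [← mul_pow, div_mul_cancel₀ _ (hxb j)]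

theorem complex_balance_of_ratio_eq [DecidableEq (ι → ℕ)] (y y' : ρ → ι → ℕ) (k : ρ → K)
    {x xb : ι → K} (hxb : ∀ j, xb j ≠ 0)
    (hcb : ∀ z, ∑ i with y i = z, k i * ∏ j, xb j ^ z j
      = ∑ i with y' i = z, k i * ∏ j, xb j ^ y i j)
    (hratio : ∀ i, ∏ j, (x j / xb j) ^ y' i j = ∏ j, (x j / xb j) ^ y i j) (z : ι → ℕ) :
    ∑ i with y' i = z, k i * ∏ j, x j ^ y i j = ∑ i with y i = z, k i * ∏ j, x j ^ y i j := by
  have inflow : ∑ i with y' i = z, k i * ∏ j, x j ^ y i j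
      = (∏ j, (x j / xb j) ^ z j) * ∑ i with y' i = z, k i * ∏ j, xb j ^ y i j := by
    rw [mul_sum]
    refine sum_congr rfl fun i hi => ?_
    rw [prod_pow_eq_prod_div_pow_mul_prod_pow hxb (y i), ← hratio i, (mem_filter.mp hi).2]
    ring
  have outflow : ∑ i with y i = z, k i * ∏ j, x j ^ y i j
      = (∏ j, (x j / xb j) ^ z j) * ∑ i with y i = z, k i * ∏ j, xb j ^ z j := by
    rw [mul_sum]
    refine sum_congr rfl fun i hi => ?_
    rw [(mem_filter.mp hi).2, prod_pow_eq_prod_div_pow_mul_prod_pow hxb z]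
    ring
  rw [inflow, outflow, hcb z]

end MassAction

theorem scaled_point_is_equilibrium_general {n r : ℕ}
    (y y' : Fin r → Fin n → ℕ) (k : Fin r → ℝ)
    (xb : Fin n → ℝ) (hxb : ∀ j, 0 < xb j)
    (hcb : ∀ z : Fin n → ℕ,
      ∑ i ∈ Finset.univ.filter (fun i => y i = z), k i * ∏ j, xb j ^ z j
        = ∑ i ∈ Finset.univ.filter (fun i => y' i = z), k i * ∏ j, xb j ^ y i j)
    (x : Fin n → ℝ)
    (hratio : ∀ i, ∏ j, (x j / xb j) ^ y' i j = ∏ j, (x j / xb j) ^ y i j) :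
    ∑ i, (k i * ∏ j, x j ^ y i j) • (fun j => ((y' i j : ℝ) - (y i j : ℝ)))
      = (0 : Fin n → ℝ) :=
  sum_smul_sub_eq_zero_of_fiber_sums_eq _ y y' (fun z j => (z j : ℝ))
    (complex_balance_of_ratio_eq y y' k (fun j => (hxb j).ne') hcb hratio)

/-- If `x̄` is a complex balanced equilibrium and `x > 0` satisfies
`(x/x̄)^{y'ᵢ} = (x/x̄)^{yᵢ}` for every reaction, then `x` is an equilibrium. -/
theorem scaled_point_is_equilibrium {n r : ℕ}
    (y y' : Fin r → Fin n → ℕ) (k : Fin r → ℝ) (hk : ∀ i, 0 < k i)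
    (xb : Fin n → ℝ) (hxb : ∀ j, 0 < xb j)
    (hcb : ∀ z : Fin n → ℕ,
      ∑ i ∈ Finset.univ.filter (fun i => y i = z), k i * ∏ j, xb j ^ z j
        = ∑ i ∈ Finset.univ.filter (fun i => y' i = z), k i * ∏ j, xb j ^ y i j)
    (x : Fin n → ℝ) (hx : ∀ j, 0 < x j)
    (hratio : ∀ i, ∏ j, (x j / xb j) ^ y' i j = ∏ j, (x j / xb j) ^ y i j) :
    ∑ i, (k i * ∏ j, x j ^ y i j) • (fun j => ((y' i j : ℝ) - (y i j : ℝ)))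
      = (0 : Fin n → ℝ) :=
  scaled_point_is_equilibrium_general y y' k xb hxb hcb x hratio
end
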